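/- arXiv:1111.0078 — 2 statements merged into one kernel-verified Lean document; each statement's English description precedes it below -/
import Mathlib

section
/- Fix ν < 2 and let g(z) = ∑_{n=0}^∞ c_n z^n where c_n = Γ(2n + 3 - ν)/(n! Γ(n + 2 - ν/2)). Then for every y ≥ 0, g(y/(y+2)^2) = (2^{2-ν}/√π) Γ((3-ν)/2) · (y+2)^{3-ν} / (y^2 + 4)^{(3-ν)/2}. -/
/-!
Legendre's duplication formula gives `Γ(2s) = 2^(2s-1) Γ(s) Γ(s+1/2) / √π`; with `s = n + b`,
`b = (3-ν)/2`, the factor `Γ(n+2-ν/2)` cancels and the series becomes `2^(2-ν)/√π` times the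
binomial series `∑ Γ(b+n)/n! (4z)^n = Γ(b) (1-4z)^(-b)`. At `z = y/(y+2)^2` one has
`1 - 4z = (y^2+4)/(y+2)^2`.
-/

open Real

theorem Real.Gamma_add_nat_eq_mul_ascPochhammer {a : ℝ} (ha : ∀ k : ℕ, a ≠ -k) (n : ℕ) :
    Gamma (a + n) = Gamma a * (ascPochhammer ℝ n).eval a := by
  induction n with
  | zero => simp
  | succ n ih =>
    have hn : a + n ≠ 0 := fun h => ha n (by linarith)
    rw [Nat.cast_succ, ← add_assoc, Gamma_add_one hn, ih, ascPochhammer_succ_eval]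
    ring

theorem Real.Gamma_mul_choose {a : ℝ} (ha : ∀ k : ℕ, a ≠ -k) (n : ℕ) :
    Gamma a * Ring.choose (a + n - 1) n = Gamma (a + n) / n.factorial := by
  have h := Ring.factorial_nsmul_multichoose_eq_ascPochhammer a n
  rw [Ring.multichoose_eq, Polynomial.ascPochhammer_smeval_eq_eval, nsmul_eq_mul] at h
  rw [Gamma_add_nat_eq_mul_ascPochhammer ha, ← h]
  field_simp

theorem Real.hasSum_Gamma_add_nat_div_factorial_mul_pow {a x : ℝ} (ha : ∀ k : ℕ, a ≠ -k)
    (hx : |x| < 1) :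
    HasSum (fun n : ℕ => Gamma (a + n) / n.factorial * x ^ n) (Gamma a * (1 - x) ^ (-a)) := by
  have hx' : x ∈ Metric.eball (0 : ℝ) 1 := by
    simpa [Metric.eball, edist_zero_right, enorm_eq_nnnorm, ← NNReal.coe_lt_one] using hx
  have h := ((one_div_one_sub_rpow_hasFPowerSeriesOnBall_zero a).hasSum hx').mul_left (Gamma a)
  simp only [FormalMultilinearSeries.ofScalars_apply_eq, smul_eq_mul, zero_add, one_div,
    ← rpow_neg (by linarith [le_abs_self x] : (0:ℝ) ≤ 1 - x)] at h
  refine h.congr_fun fun n => ?_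
  rw [← mul_assoc, Gamma_mul_choose ha]

theorem Real.Gamma_two_mul (s : ℝ) :
    Gamma (2 * s) = 2 ^ (2 * s - 1) / √π * Gamma s * Gamma (s + 1 / 2) := by
  have h2 : (2 : ℝ) ^ (2 * s - 1) * 2 ^ (1 - 2 * s) = 1 := by
    rw [← rpow_add two_pos]; norm_num
  have hπ : √π ≠ 0 := (sqrt_pos.mpr pi_pos).ne'
  rw [mul_assoc, Gamma_mul_Gamma_add_half]
  field_simp
  linear_combination -Gamma (2 * s) * h2

theorem Real.hasSum_Gamma_two_mul_div_factorial_mul_Gamma_mul_pow {b z : ℝ} (hb : 0 < b)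
    (hz : |4 * z| < 1) :
    HasSum (fun n : ℕ => Gamma (2 * (b + n)) / (n.factorial * Gamma (b + n + 1 / 2)) * z ^ n)
      (2 ^ (2 * b - 1) / √π * Gamma b * (1 - 4 * z) ^ (-b)) := by
  have hb' : ∀ k : ℕ, b ≠ -k := fun k => by linarith [k.cast_nonneg (α := ℝ)]
  rw [mul_assoc]
  refine ((hasSum_Gamma_add_nat_div_factorial_mul_pow hb' hz).mul_left _).congr_fun fun n => ?_
  have hΓ : Gamma (b + n + 1 / 2) ≠ 0 := (Gamma_pos_of_pos (by positivity)).ne'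
  have h4 : (2 : ℝ) ^ (2 * (b + n) - 1) = 2 ^ (2 * b - 1) * 4 ^ n := by
    rw [show 2 * (b + n) - 1 = (2 * b - 1) + (2 * n : ℕ) by push_cast; ring, rpow_add two_pos,
      rpow_natCast, pow_mul]
    norm_num
  rw [Gamma_two_mul, h4, mul_pow]
  field_simp

/-- For `ν < 2` and `y ≥ 0`, the power series `g(z) = ∑ c_n z^n` with
`c_n = Γ(2n+3-ν)/(n! Γ(n+2-ν/2))` satisfies
`g(y/(y+2)^2) = (2^(2-ν)/√π) Γ((3-ν)/2) (y+2)^(3-ν) / (y^2+4)^((3-ν)/2)`. -/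
theorem series_closed_form (ν : ℝ) (hν : ν < 2) (y : ℝ) (hy : 0 ≤ y) :
    ∑' n : ℕ,
        Real.Gamma (2 * (n : ℝ) + 3 - ν) / ((n.factorial : ℝ) * Real.Gamma ((n : ℝ) + 2 - ν / 2))
          * (y / (y + 2) ^ 2) ^ n
      = 2 ^ (2 - ν) / Real.sqrt π * Real.Gamma ((3 - ν) / 2)
          * (y + 2) ^ (3 - ν) / (y ^ 2 + 4) ^ ((3 - ν) / 2) := by
  have hy2 : 0 < (y + 2) ^ 2 := by positivity
  have h1z : 1 - 4 * (y / (y + 2) ^ 2) = (y ^ 2 + 4) / (y + 2) ^ 2 := by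
    field_simp; ring
  have hz : |4 * (y / (y + 2) ^ 2)| < 1 := by
    rw [abs_of_nonneg (by positivity)]
    linarith [div_pos (by positivity : (0:ℝ) < y ^ 2 + 4) hy2]
  have hpow : (1 - 4 * (y / (y + 2) ^ 2)) ^ (-((3 - ν) / 2))
      = (y + 2) ^ (3 - ν) / (y ^ 2 + 4) ^ ((3 - ν) / 2) := by
    rw [h1z, rpow_neg (by positivity), div_rpow (by positivity) hy2.le, inv_div,
      ← rpow_natCast, ← rpow_mul (by linarith)]
    congr 2
    push_cast
    ring
  have hsum := hasSum_Gamma_two_mul_div_factorial_mul_Gamma_mul_pow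
    (by linarith : 0 < (3 - ν) / 2) hz
  rw [hpow, show 2 * ((3 - ν) / 2) - 1 = 2 - ν by ring] at hsum
  rw [mul_div_assoc, ← hsum.tsum_eq]
  congr! 5 with n
  · ring
  · congr 1; ring
end

section
/- Define I(ν) = ∫_0^∞ h_ν(y) log y dy where h_ν(y) = (2^{2-ν}/√π)(Γ((3-ν)/2)/Γ(1-ν/2))(y^2+4)^{-(3-ν)/2}, for ν < 2. Then I(ν) = (1/4)(ψ(1) - ψ((2-ν)/2)), and consequently I(ν) < 0 if and only if ν < 0. -/
/-!
With `s = (3 - ν) / 2`, the Mellin transform `M(a) = ∫₀^∞ y^(a-1) (y² + 4)^(-s) dy` is a Beta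
integral, `M(a) = 2^(a-2s) Γ(a/2) Γ(s - a/2) / (2 Γ(s))`, and `∫₀^∞ (y² + 4)^(-s) log y dy = M'(1)`
by differentiating under the Mellin integral. Logarithmic differentiation of the Gamma product
gives `M'(1) = M(1) (log 2 + (ψ(1/2) - ψ(s - 1/2)) / 2)`; the prefactor of `h_ν` is exactly
`1 / (2 M(1))`, and `ψ(1/2) = ψ(1) - 2 log 2` yields the formula. The sign then follows from the
strict monotonicity of `ψ`, which comes from the log-convexity of `Γ` and `ψ(x + 1) = ψ(x) + 1/x`.
-/

open MeasureTheory Real Set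

/-- The digamma function `ψ = Γ'/Γ`. -/
noncomputable def digamma (x : ℝ) : ℝ := deriv Real.Gamma x / Real.Gamma x

/-- `I(ν) = ∫_0^∞ h_ν(y) log y dy`, where
`h_ν(y) = (2^(2-ν)/√π)(Γ((3-ν)/2)/Γ(1-ν/2))(y²+4)^(-(3-ν)/2)`. -/
noncomputable def I (ν : ℝ) : ℝ :=
  ∫ y in Ioi (0 : ℝ),
    2 ^ (2 - ν) / Real.sqrt π * (Real.Gamma ((3 - ν) / 2) / Real.Gamma (1 - ν / 2))
      * (y ^ 2 + 4) ^ (-((3 - ν) / 2)) * Real.log y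

open Filter Asymptotics Topology

lemma hasDerivAt_Gamma_of_pos {x : ℝ} (hx : 0 < x) :
    HasDerivAt Gamma (Gamma x * digamma x) x := by
  rw [digamma, mul_div_cancel₀ _ (Gamma_pos_of_pos hx).ne']
  exact (differentiableOn_Gamma_Ioi.differentiableAt (Ioi_mem_nhds hx)).hasDerivAt

lemma deriv_log_comp_Gamma {x : ℝ} (hx : 0 < x) : deriv (log ∘ Gamma) x = digamma x := by
  rw [Function.comp_def, ((hasDerivAt_Gamma_of_pos hx).log (Gamma_pos_of_pos hx).ne').deriv,
    mul_div_cancel_left₀ _ (Gamma_pos_of_pos hx).ne']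

lemma digamma_monotoneOn : MonotoneOn digamma (Ioi 0) := by
  have hmono := convexOn_log_Gamma.monotoneOn_deriv fun x hx =>
    ((hasDerivAt_Gamma_of_pos hx).log (Gamma_pos_of_pos hx).ne').differentiableAt
  intro x hx y hy hxy
  simpa only [deriv_log_comp_Gamma hx, deriv_log_comp_Gamma hy] using hmono hx hy hxy

lemma digamma_add_one {x : ℝ} (hx : 0 < x) : digamma (x + 1) = digamma x + x⁻¹ := by
  have hshift : HasDerivAt (fun y => Gamma (y + 1)) (Gamma (x + 1) * digamma (x + 1)) x :=
    (hasDerivAt_Gamma_of_pos (by linarith)).comp_add_const x 1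
  have hrec : (fun y => Gamma (y + 1)) =ᶠ[𝓝 x] fun y => y * Gamma y := by
    filter_upwards [eventually_ne_nhds hx.ne'] with y hy using Gamma_add_one hy
  have hprod :=
    ((hasDerivAt_id' x).fun_mul (hasDerivAt_Gamma_of_pos hx)).congr_of_eventuallyEq hrec
  have hΓ := (Gamma_pos_of_pos hx).ne'
  have hderiv := hshift.unique hprod
  rw [Gamma_add_one hx.ne'] at hderiv
  field_simp at hderiv ⊢
  linarith

lemma digamma_strictMonoOn : StrictMonoOn digamma (Ioi 0) := by
  intro x hx y hy hxy
  have hx : (0 : ℝ) < x := hx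
  have hy : (0 : ℝ) < y := hy
  have h := digamma_monotoneOn (mem_Ioi.mpr (by linarith : 0 < x + 1))
    (mem_Ioi.mpr (by linarith : 0 < y + 1)) (by linarith : x + 1 ≤ y + 1)
  rw [digamma_add_one hx, digamma_add_one hy] at h
  linarith [inv_strictAntiOn hx hy hxy]

lemma digamma_one : digamma 1 = -eulerMascheroniConstant := by
  rw [digamma, hasDerivAt_Gamma_one.deriv, Gamma_one, div_one]

lemma digamma_one_half : digamma (1 / 2) = -2 * log 2 - eulerMascheroniConstant := by
  rw [digamma, hasDerivAt_Gamma_one_half.deriv, Gamma_one_half_eq]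
  field_simp
  ring

lemma integral_rpow_mul_one_sub_rpow {u v : ℝ} (hu : 0 < u) (hv : 0 < v) :
    ∫ x in Ioo (0 : ℝ) 1, x ^ (u - 1) * (1 - x) ^ (v - 1) =
      Gamma u * Gamma v / Gamma (u + v) := by
  have h := Complex.Gamma_mul_Gamma_eq_betaIntegral (s := u) (t := v) (by simpa using hu)
    (by simpa using hv)
  rw [Complex.betaIntegral, intervalIntegral.integral_of_le zero_le_one,
    integral_Ioc_eq_integral_Ioo, ← Complex.ofReal_add] at h
  simp only [Complex.Gamma_ofReal] at h
  have hΓ : Gamma (u + v) ≠ 0 := (Gamma_pos_of_pos (by linarith)).ne'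
  rw [eq_div_iff hΓ, ← Complex.ofReal_inj]
  push_cast
  rw [h, mul_comm, ← integral_complex_ofReal]
  congr 1
  refine setIntegral_congr_fun measurableSet_Ioo fun x hx => ?_
  rw [Complex.ofReal_mul, Complex.ofReal_cpow hx.1.le,
    Complex.ofReal_cpow (sub_nonneg.mpr hx.2.le)]
  push_cast
  ring

lemma integral_rpow_mul_one_add_rpow_neg {w s : ℝ} (hw : 0 < w) (hws : w < s) :
    ∫ t in Ioi 0, t ^ (w - 1) * (1 + t) ^ (-s) = Gamma w * Gamma (s - w) / Gamma s := by
  have hderiv : ∀ x ∈ Ioo (0 : ℝ) 1,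
      HasDerivWithinAt (fun x => x / (1 - x)) (1 / (1 - x) ^ 2) (Ioo 0 1) x := by
    intro x hx
    have hx1 : 1 - x ≠ 0 := (sub_pos.mpr hx.2).ne'
    refine ((hasDerivAt_id' x).div ((hasDerivAt_id' x).const_sub 1) hx1).hasDerivWithinAt
      |>.congr_deriv ?_
    field_simp
    ring
  have hinj : InjOn (fun x : ℝ => x / (1 - x)) (Ioo 0 1) := by
    intro x hx y hy hxy
    have hx1 : 1 - x ≠ 0 := (sub_pos.mpr hx.2).ne'
    have hy1 : 1 - y ≠ 0 := (sub_pos.mpr hy.2).ne'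
    rw [div_eq_div_iff hx1 hy1] at hxy
    linarith
  have himage : (fun x : ℝ => x / (1 - x)) '' Ioo 0 1 = Ioi 0 := by
    ext t
    refine ⟨?_, fun ht => ⟨t / (1 + t), ?_, ?_⟩⟩
    · rintro ⟨x, hx, rfl⟩
      exact div_pos hx.1 (sub_pos.mpr hx.2)
    · have ht : (0 : ℝ) < t := ht
      refine ⟨by positivity, (div_lt_one (by positivity)).mpr (by linarith)⟩
    · have ht : (0 : ℝ) < t := ht
      field_simp
      ring
  have hsubst := integral_image_eq_integral_abs_deriv_smul measurableSet_Ioo hderiv hinj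
    fun t => t ^ (w - 1) * (1 + t) ^ (-s)
  have hbeta := integral_rpow_mul_one_sub_rpow hw (sub_pos.mpr hws)
  rw [add_sub_cancel] at hbeta
  rw [himage] at hsubst
  rw [hsubst, ← hbeta]
  refine setIntegral_congr_fun measurableSet_Ioo fun x hx => ?_
  have hx1 : 0 < 1 - x := sub_pos.mpr hx.2
  have hone_add : 1 + x / (1 - x) = (1 - x)⁻¹ := by field_simp; ring
  have hpow : (1 - x) ^ (s - w - 1) = (1 - x) ^ s / ((1 - x) ^ (w - 1) * (1 - x) ^ 2) := by
    rw [show s - w - 1 = s - ((w - 1) + 2) by ring, rpow_sub hx1, rpow_add hx1, rpow_two]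
  rw [smul_eq_mul, abs_of_pos (by positivity), hone_add, inv_rpow hx1.le, rpow_neg hx1.le, inv_inv,
    div_rpow hx.1.le hx1.le, hpow]
  field_simp

lemma integral_rpow_mul_one_add_sq_rpow_neg {a s : ℝ} (ha : 0 < a) (has : a < 2 * s) :
    ∫ x in Ioi 0, x ^ (a - 1) * (1 + x ^ 2) ^ (-s) =
      Gamma (a / 2) * Gamma (s - a / 2) / Gamma s / 2 := by
  have hsubst := integral_comp_rpow_Ioi_of_pos (g := fun t => t ^ (a / 2 - 1) * (1 + t) ^ (-s))
    two_pos
  rw [integral_rpow_mul_one_add_rpow_neg (half_pos ha) (by linarith)] at hsubst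
  rw [← hsubst, ← integral_div]
  refine setIntegral_congr_fun measurableSet_Ioi fun x hx => ?_
  have hx : 0 < x := hx
  have hpow : x ^ ((2 : ℝ) - 1) * (x ^ (2 : ℝ)) ^ (a / 2 - 1) = x ^ (a - 1) := by
    rw [← rpow_mul hx.le, ← rpow_add hx]
    ring_nf
  rw [smul_eq_mul, ← hpow, rpow_two]
  ring

lemma integral_rpow_mul_sq_add_sq_rpow_neg {a c s : ℝ} (hc : 0 < c) (ha : 0 < a)
    (has : a < 2 * s) :
    ∫ y in Ioi 0, y ^ (a - 1) * (y ^ 2 + c ^ 2) ^ (-s) =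
      c ^ (a - 2 * s) * (Gamma (a / 2) * Gamma (s - a / 2) / Gamma s / 2) := by
  have hscale := integral_comp_mul_left_Ioi (fun y => y ^ (a - 1) * (y ^ 2 + c ^ 2) ^ (-s)) 0 hc
  rw [mul_zero, smul_eq_mul, eq_inv_mul_iff_mul_eq₀ hc.ne'] at hscale
  rw [← hscale, ← integral_rpow_mul_one_add_sq_rpow_neg ha has, ← integral_const_mul,
    ← integral_const_mul]
  refine setIntegral_congr_fun measurableSet_Ioi fun x hx => ?_
  have hx : 0 < x := hx
  have hsq : (c * x) ^ 2 + c ^ 2 = c ^ 2 * (1 + x ^ 2) := by ring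
  rw [hsq, mul_rpow hc.le hx.le, mul_rpow (by positivity) (by positivity), ← rpow_natCast,
    ← rpow_mul hc.le]
  rw [show a - 2 * s = 1 + (a - 1) + ((2 : ℕ) : ℝ) * -s by push_cast; ring, rpow_add hc,
    rpow_add hc, rpow_one]
  ring

lemma hasDerivAt_rpow_mul_Gamma_mul_Gamma {a c s : ℝ} (hc : 0 < c) (ha : 0 < a)
    (has : a < 2 * s) :
    HasDerivAt (fun a => c ^ (a - 2 * s) * (Gamma (a / 2) * Gamma (s - a / 2) / Gamma s / 2))
      (c ^ (a - 2 * s) * (Gamma (a / 2) * Gamma (s - a / 2) / Gamma s / 2) *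
        (log c + (digamma (a / 2) - digamma (s - a / 2)) / 2)) a := by
  have hpow : HasDerivAt (fun a => c ^ (a - 2 * s)) (c ^ (a - 2 * s) * log c) a :=
    (hasStrictDerivAt_const_rpow hc (a - 2 * s)).hasDerivAt.comp_sub_const a (2 * s)
  have hleft : HasDerivAt (fun a => Gamma (a / 2)) (Gamma (a / 2) * digamma (a / 2) * (1 / 2)) a :=
    (hasDerivAt_Gamma_of_pos (half_pos ha)).comp (h := fun a => a / 2) a
      ((hasDerivAt_id' a).div_const 2)
  have hright : HasDerivAt (fun a => Gamma (s - a / 2))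
      (Gamma (s - a / 2) * digamma (s - a / 2) * -(1 / 2)) a :=
    (hasDerivAt_Gamma_of_pos (by linarith)).comp (h := fun a => s - a / 2) a
      (((hasDerivAt_id' a).div_const 2).const_sub s)
  refine (hpow.fun_mul (((hleft.fun_mul hright).div_const (Gamma s)).div_const 2)).congr_deriv ?_
  ring

lemma continuous_sq_add_sq_rpow {c : ℝ} (hc : 0 < c) (p : ℝ) :
    Continuous fun t : ℝ => (t ^ 2 + c ^ 2) ^ p :=
  (by fun_prop : Continuous fun t : ℝ => t ^ 2 + c ^ 2).rpow_const fun t => Or.inl (by positivity)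

lemma sq_add_sq_rpow_neg_isBigO_atTop {c s : ℝ} (hs : 0 ≤ s) :
    (fun t : ℝ => (t ^ 2 + c ^ 2) ^ (-s)) =O[atTop] (· ^ (-(2 * s))) := by
  refine IsBigO.of_bound 1 ?_
  filter_upwards [eventually_gt_atTop 0] with t ht
  have hsq : t ^ (-(2 * s)) = (t ^ 2) ^ (-s) := by
    rw [← rpow_natCast, ← rpow_mul ht.le]; ring_nf
  rw [norm_of_nonneg (by positivity), norm_of_nonneg (by positivity), one_mul, hsq]
  exact rpow_le_rpow_of_nonpos (by positivity) (by nlinarith) (by linarith)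

lemma sq_add_sq_rpow_isBigO_nhdsGT_zero {c : ℝ} (hc : 0 < c) (p : ℝ) :
    (fun t : ℝ => (t ^ 2 + c ^ 2) ^ p) =O[𝓝[>] 0] (· ^ (-(0 : ℝ))) := by
  simp only [neg_zero, rpow_zero]
  exact (((continuous_sq_add_sq_rpow hc p).tendsto 0).isBigO_one ℝ).mono nhdsWithin_le_nhds

lemma mellin_ofReal (f : ℝ → ℝ) (z : ℝ) :
    mellin (fun t => (f t : ℂ)) z = ((∫ t in Ioi 0, t ^ (z - 1) * f t : ℝ) : ℂ) := by
  rw [mellin, ← integral_complex_ofReal]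
  refine setIntegral_congr_fun measurableSet_Ioi fun t ht => ?_
  rw [smul_eq_mul, Complex.ofReal_mul, Complex.ofReal_cpow (le_of_lt ht)]
  push_cast
  rfl

lemma hasDerivAt_integral_rpow_mul {f : ℝ → ℝ} {a b s : ℝ}
    (hfc : LocallyIntegrableOn f (Ioi 0)) (hf_top : f =O[atTop] (· ^ (-a))) (hs_top : s < a)
    (hf_bot : f =O[𝓝[>] 0] (· ^ (-b))) (hs_bot : b < s) :
    HasDerivAt (fun z : ℝ => ∫ t in Ioi 0, t ^ (z - 1) * f t)
      (∫ t in Ioi 0, t ^ (s - 1) * (log t * f t)) s := by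
  have hcast : ∀ {l : Filter ℝ} {g : ℝ → ℝ}, f =O[l] g → (fun t => (f t : ℂ)) =O[l] g :=
    fun h => isBigO_norm_left.mp (by simpa using h.norm_left)
  have hfc' : LocallyIntegrableOn (fun t => (f t : ℂ)) (Ioi 0) := fun x hx =>
    let ⟨u, hu, hfu⟩ := hfc x hx; ⟨u, hu, hfu.ofReal⟩
  have h := (mellin_hasDerivAt_of_isBigO_rpow hfc' (hcast hf_top)
    (by simpa using hs_top) (hcast hf_bot) (by simpa using hs_bot)).2.real_of_complex
  have hlog : (fun t => log t • (f t : ℂ)) = fun t => ((log t * f t : ℝ) : ℂ) := by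
    ext t; simp
  simpa only [hlog, mellin_ofReal, Complex.ofReal_re] using h

lemma integral_sq_add_sq_rpow_neg_mul_log {c s : ℝ} (hc : 0 < c) (hs : 1 / 2 < s) :
    ∫ y in Ioi 0, (y ^ 2 + c ^ 2) ^ (-s) * log y =
      c ^ (1 - 2 * s) * (Gamma (1 / 2) * Gamma (s - 1 / 2) / Gamma s / 2) *
        (log c + (digamma (1 / 2) - digamma (s - 1 / 2)) / 2) := by
  have hmellin := hasDerivAt_integral_rpow_mul
    ((continuous_sq_add_sq_rpow hc (-s)).locallyIntegrable.locallyIntegrableOn _)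
    (sq_add_sq_rpow_neg_isBigO_atTop (c := c) (by linarith)) (by linarith : (1 : ℝ) < 2 * s)
    (sq_add_sq_rpow_isBigO_nhdsGT_zero hc (-s)) one_pos
  have hclosed : (fun a => ∫ y in Ioi 0, y ^ (a - 1) * (y ^ 2 + c ^ 2) ^ (-s)) =ᶠ[𝓝 1]
      fun a => c ^ (a - 2 * s) * (Gamma (a / 2) * Gamma (s - a / 2) / Gamma s / 2) := by
    filter_upwards [Ioo_mem_nhds one_pos (by linarith : (1 : ℝ) < 2 * s)] with a ha
    exact integral_rpow_mul_sq_add_sq_rpow_neg hc ha.1 ha.2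
  have h := hmellin.unique
    ((hasDerivAt_rpow_mul_Gamma_mul_Gamma hc one_pos (by linarith)).congr_of_eventuallyEq hclosed)
  simp only [sub_self, rpow_zero, one_mul] at h
  rw [← h]
  exact setIntegral_congr_fun measurableSet_Ioi fun y _ => mul_comm _ _

/-- `I(ν) = (1/4)(ψ(1) - ψ((2-ν)/2))`, and hence `I(ν) < 0` iff `ν < 0`. -/
theorem I_formula_and_sign (ν : ℝ) (hν : ν < 2) :
    I ν = 1 / 4 * (digamma 1 - digamma ((2 - ν) / 2)) ∧ (I ν < 0 ↔ ν < 0) := by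
  have hlog := integral_sq_add_sq_rpow_neg_mul_log (s := (3 - ν) / 2) two_pos (by linarith)
  rw [show (2 : ℝ) ^ 2 = 4 by norm_num, show (3 - ν) / 2 - 1 / 2 = (2 - ν) / 2 by ring,
    show 1 - 2 * ((3 - ν) / 2) = -(2 - ν) by ring, rpow_neg two_pos.le] at hlog
  have hformula : I ν = 1 / 4 * (digamma 1 - digamma ((2 - ν) / 2)) := by
    simp_rw [I, mul_assoc, integral_const_mul]
    rw [hlog, show 1 - ν / 2 = (2 - ν) / 2 by ring, digamma_one, digamma_one_half,
      Gamma_one_half_eq]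
    have hΓ := (Gamma_pos_of_pos (by linarith : 0 < (3 - ν) / 2)).ne'
    have hΓ' := (Gamma_pos_of_pos (by linarith : 0 < (2 - ν) / 2)).ne'
    have hπ := (sqrt_pos.mpr pi_pos).ne'
    have h2 : (2 : ℝ) ^ (2 - ν) ≠ 0 := by positivity
    field_simp
    ring
  have hmono : digamma 1 < digamma ((2 - ν) / 2) ↔ 1 < (2 - ν) / 2 :=
    digamma_strictMonoOn.lt_iff_lt (mem_Ioi.mpr one_pos) (mem_Ioi.mpr (by linarith))
  refine ⟨hformula, ?_⟩
  rw [hformula]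
  constructor <;> intro h
  · linarith [hmono.mp (by linarith)]
  · linarith [hmono.mpr (by linarith)]
end
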